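/- For each n ∈ ℕ, the isometric isomorphism f_n induced by the equivalence bimodule pair (X ⊗ M_n(ℂ), Y ⊗ M_n(ℂ)) between the inclusions M_n(A) ⊂ M_n(C) and M_n(B) ⊂ M_n(D) satisfies f_n(φ ⊗ id_{M_n(ℂ)}) = f(φ) ⊗ id_{M_n(ℂ)} for every bounded A-bimodule linear map φ : C → A. -/

import Mathlib

/-- A pair `(X, Y)` implementing a strong Morita equivalence of unital inclusions
`A ⊆ C` and `B ⊆ D` of unital C*-algebras: `Y` is a `C`–`D`-equivalence bimodule and
`X` is a closed subspace of `Y` which is an `A`–`B`-equivalence bimodule with the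
restricted actions and inner products. -/
structure MoritaPair
    (A : Type*) [NormedRing A] [StarRing A] [CStarRing A] [NormedAlgebra ℂ A]
      [CompleteSpace A] [StarModule ℂ A]
    (C : Type*) [NormedRing C] [StarRing C] [CStarRing C] [NormedAlgebra ℂ C]
      [CompleteSpace C] [StarModule ℂ C]
    (B : Type*) [NormedRing B] [StarRing B] [CStarRing B] [NormedAlgebra ℂ B]
      [CompleteSpace B] [StarModule ℂ B]
    (D : Type*) [NormedRing D] [StarRing D] [CStarRing D] [NormedAlgebra ℂ D]
      [CompleteSpace D] [StarModule ℂ D]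
    (X : Type*) [NormedAddCommGroup X] [NormedSpace ℂ X]
    (Y : Type*) [NormedAddCommGroup Y] [NormedSpace ℂ Y] [CompleteSpace Y] where
  /-- the unital isometric *-embedding of `A` into `C` -/
  ιA : A →⋆ₐ[ℂ] C
  /-- the unital isometric *-embedding of `B` into `D` -/
  ιB : B →⋆ₐ[ℂ] D
  ιA_isometry : Isometry ιA
  ιB_isometry : Isometry ιB
  /-- the inclusion of the closed subspace `X` into `Y` -/
  incl : X →ₗ[ℂ] Y
  incl_norm : ∀ x, ‖incl x‖ = ‖x‖
  incl_closed : IsClosed (Set.range incl)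
  /-- left action of `C` on `Y` -/
  lC : C → Y → Y
  lC_one : ∀ y, lC 1 y = y
  lC_mul : ∀ c c' y, lC (c * c') y = lC c (lC c' y)
  lC_add_right : ∀ c y y', lC c (y + y') = lC c y + lC c y'
  lC_add_left : ∀ c c' y, lC (c + c') y = lC c y + lC c' y
  lC_smul : ∀ (z : ℂ) c y, lC (z • c) y = z • lC c y
  /-- right action of `D` on `Y` -/
  rD : Y → D → Y
  rD_one : ∀ y, rD y 1 = y
  rD_mul : ∀ y d d', rD y (d * d') = rD (rD y d) d'
  rD_add_left : ∀ y y' d, rD (y + y') d = rD y d + rD y' d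
  rD_add_right : ∀ y d d', rD y (d + d') = rD y d + rD y d'
  rD_smul : ∀ (z : ℂ) y d, rD y (z • d) = z • rD y d
  smul_assoc : ∀ c y d, rD (lC c y) d = lC c (rD y d)
  /-- the left `C`-valued inner product on `Y` -/
  innC : Y → Y → C
  innC_add_left : ∀ y y' z, innC (y + y') z = innC y z + innC y' z
  innC_star : ∀ y z, star (innC y z) = innC z y
  innC_lC : ∀ c y z, innC (lC c y) z = c * innC y z
  innC_norm : ∀ y, ‖innC y y‖ = ‖y‖ ^ 2
  /-- the right `D`-valued inner product on `Y` -/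
  innD : Y → Y → D
  innD_add_right : ∀ y z z', innD y (z + z') = innD y z + innD y z'
  innD_star : ∀ y z, star (innD y z) = innD z y
  innD_rD : ∀ y z d, innD y (rD z d) = innD y z * d
  innD_norm : ∀ y, ‖innD y y‖ = ‖y‖ ^ 2
  imprimitivity : ∀ y z w, lC (innC y z) w = rD y (innD z w)
  innC_full : (Submodule.span ℂ {c : C | ∃ y z, innC y z = c}).topologicalClosure = ⊤
  innD_full : (Submodule.span ℂ {d : D | ∃ y z, innD y z = d}).topologicalClosure = ⊤
  /-- left action of `A` on `X`, the restriction of the `C`-action -/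
  lA : A → X → X
  lA_compat : ∀ a x, incl (lA a x) = lC (ιA a) (incl x)
  /-- right action of `B` on `X`, the restriction of the `D`-action -/
  rB : X → B → X
  rB_compat : ∀ x b, incl (rB x b) = rD (incl x) (ιB b)
  /-- the left `A`-valued inner product on `X`, the restriction of `innC` -/
  innA : X → X → A
  innA_compat : ∀ x z, ιA (innA x z) = innC (incl x) (incl z)
  /-- the right `B`-valued inner product on `X`, the restriction of `innD` -/
  innB : X → X → B
  innB_compat : ∀ x z, ιB (innB x z) = innD (incl x) (incl z)
  innA_full : (Submodule.span ℂ {a : A | ∃ x z, innA x z = a}).topologicalClosure = ⊤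
  innB_full : (Submodule.span ℂ {b : B | ∃ x z, innB x z = b}).topologicalClosure = ⊤

variable {A : Type*} [NormedRing A] [StarRing A] [CStarRing A] [NormedAlgebra ℂ A]
  [CompleteSpace A] [StarModule ℂ A]
variable {C : Type*} [NormedRing C] [StarRing C] [CStarRing C] [NormedAlgebra ℂ C]
  [CompleteSpace C] [StarModule ℂ C]
variable {B : Type*} [NormedRing B] [StarRing B] [CStarRing B] [NormedAlgebra ℂ B]
  [CompleteSpace B] [StarModule ℂ B]
variable {D : Type*} [NormedRing D] [StarRing D] [CStarRing D] [NormedAlgebra ℂ D]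
  [CompleteSpace D] [StarModule ℂ D]
variable {X : Type*} [NormedAddCommGroup X] [NormedSpace ℂ X]
variable {Y : Type*} [NormedAddCommGroup Y] [NormedSpace ℂ Y] [CompleteSpace Y]

/-!
Both `ψn dM i j` and `ψ (dM i j)` solve the defining identity of `f(φ)` at `dM i j`: test the
matrix identity on matrices supported in a single column. That identity has at most one solution
`b`, since it determines `⟨x · b, z⟩_A` for all `x, z`; the `A`-valued inner product on `X` is
nondegenerate, so it determines `x · b` for all `x`, and then `⟨z, x⟩_B b` for all `x, z`, which
pins down `b` because these inner products span a dense subspace of `B`.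
-/

namespace MoritaPair

variable (M : MoritaPair A C B D X Y)

theorem incl_injective : Function.Injective M.incl := by
  refine (injective_iff_map_eq_zero M.incl).2 fun x hx => ?_
  rw [← norm_eq_zero, ← M.incl_norm, hx, norm_zero]

theorem rD_zero_left (d : D) : M.rD 0 d = 0 := by
  simpa using M.rD_add_left 0 0 d

theorem rB_zero_left (b : B) : M.rB 0 b = 0 :=
  M.incl_injective <| by rw [M.rB_compat, map_zero, rD_zero_left]

theorem innC_zero_left (y : Y) : M.innC 0 y = 0 := by
  simpa using M.innC_add_left 0 0 y

theorem innC_zero_right (y : Y) : M.innC y 0 = 0 := by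
  rw [← M.innC_star, innC_zero_left, star_zero]

theorem innA_zero_right (x : X) : M.innA x 0 = 0 :=
  M.ιA_isometry.injective <| by rw [M.innA_compat, map_zero, map_zero, innC_zero_right]

theorem innC_sub_left (y y' z : Y) : M.innC (y - y') z = M.innC y z - M.innC y' z := by
  rw [eq_sub_iff_add_eq, ← M.innC_add_left, sub_add_cancel]

theorem eq_zero_of_innC_self_eq_zero {y : Y} (h : M.innC y y = 0) : y = 0 := by
  have hnorm := M.innC_norm y
  rwa [h, norm_zero, eq_comm, sq_eq_zero_iff, norm_eq_zero] at hnorm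

theorem ext_innA {p q : X} (h : ∀ z, M.innA p z = M.innA q z) : p = q := by
  rw [← sub_eq_zero]
  apply M.incl_injective
  rw [map_zero]
  have horth : ∀ z, M.innC (M.incl (p - q)) (M.incl z) = 0 := fun z => by
    rw [map_sub, innC_sub_left, ← M.innA_compat, ← M.innA_compat, h, sub_self]
  exact M.eq_zero_of_innC_self_eq_zero (horth _)

theorem innB_rB (z x : X) (b : B) : M.innB z (M.rB x b) = M.innB z x * b :=
  M.ιB_isometry.injective <| by
    rw [map_mul, M.innB_compat, M.innB_compat, M.rB_compat, M.innD_rD]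

theorem ext_rB {b b' : B} (h : ∀ x, M.rB x b = M.rB x b') : b = b' := by
  let g : B →L[ℂ] B := (ContinuousLinearMap.mul ℂ B).flip (b - b')
  have hspan :
      Submodule.span ℂ {b₀ : B | ∃ x z, M.innB x z = b₀} ≤ LinearMap.ker (g : B →ₗ[ℂ] B) := by
    rw [Submodule.span_le]
    rintro _ ⟨x, z, rfl⟩
    change M.innB x z * (b - b') = 0
    rw [mul_sub, ← innB_rB, ← innB_rB, h, sub_self]
  have hclosure := Submodule.topologicalClosure_minimal _ hspan g.isClosed_ker
  rw [M.innB_full] at hclosure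
  have hone : (1 : B) * (b - b') = 0 := hclosure Submodule.mem_top
  rwa [one_mul, sub_eq_zero] at hone

theorem innA_rB_entry_of_matrix {n : ℕ} (φ : C → A) (hφ : φ 0 = 0)
    (dM : Matrix (Fin n) (Fin n) D) (bM : Matrix (Fin n) (Fin n) B)
    (h : ∀ (xM zM : Matrix (Fin n) (Fin n) X) (i j : Fin n),
      ∑ k, M.innA (∑ l, M.rB (xM i l) (bM l k)) (zM j k)
        = ∑ k, φ (M.innC (∑ l, M.rD (M.incl (xM i l)) (dM l k)) (M.incl (zM j k))))
    (x z : X) (i j : Fin n) :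
    M.innA (M.rB x (bM i j)) z = φ (M.innC (M.rD (M.incl x) (dM i j)) (M.incl z)) := by
  simpa only [apply_ite M.rB, apply_ite M.rD, apply_ite M.incl, apply_ite (M.innA _),
    apply_ite (M.innC _), apply_ite φ, ite_apply, map_zero, rB_zero_left, rD_zero_left,
    innA_zero_right, innC_zero_right, hφ, Finset.sum_ite_eq', Finset.mem_univ, if_true]
    using h (fun _ l => if l = i then x else 0) (fun _ k => if k = j then z else 0) i j

end MoritaPair

theorem stmt12_general (M : MoritaPair A C B D X Y) (n : ℕ) (φ : C →L[ℂ] A)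
    (ψ : D →L[ℂ] B)
    (hψ : ∀ (d : D) (x z : X),
      M.innA (M.rB x (ψ d)) z = φ (M.innC (M.rD (M.incl x) d) (M.incl z)))
    (ψn : Matrix (Fin n) (Fin n) D → Matrix (Fin n) (Fin n) B)
    (hψn : ∀ (dM : Matrix (Fin n) (Fin n) D)
        (xM zM : Matrix (Fin n) (Fin n) X) (i j : Fin n),
      ∑ k, M.innA (∑ l, M.rB (xM i l) (ψn dM l k)) (zM j k)
        = ∑ k, φ (M.innC (∑ l, M.rD (M.incl (xM i l)) (dM l k)) (M.incl (zM j k)))) :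
    ∀ (dM : Matrix (Fin n) (Fin n) D) (i j : Fin n), ψn dM i j = ψ (dM i j) := by
  intro dM i j
  refine M.ext_rB fun x => M.ext_innA fun z => ?_
  rw [M.innA_rB_entry_of_matrix φ (map_zero φ) dM (ψn dM) (hψn dM), hψ]

/-- the isometric isomorphism `f_n` induced by the pair
`(X ⊗ M_n(ℂ), Y ⊗ M_n(ℂ))` between the matrix inclusions `M_n(A) ⊆ M_n(C)` and
`M_n(B) ⊆ M_n(D)` satisfies `f_n(φ ⊗ id) = f(φ) ⊗ id`.  Here `X ⊗ M_n(ℂ)` is realized as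
`n × n`-matrices over `X`, the module actions and inner products being given by matrix
multiplication, `f(φ)` is characterized by `⟨x·f(φ)(d), z⟩_A = φ(⟨x·d, z⟩_C)` and `f_n` of
`φ ⊗ id` by the corresponding matrix-level characterization. -/
theorem stmt12 (M : MoritaPair A C B D X Y) (n : ℕ) (φ : C →L[ℂ] A)
    (hφ : ∀ (a : A) (c : C), φ (M.ιA a * c) = a * φ c ∧ φ (c * M.ιA a) = φ c * a)
    (ψ : D →L[ℂ] B)
    (hψ : ∀ (d : D) (x z : X),
      M.innA (M.rB x (ψ d)) z = φ (M.innC (M.rD (M.incl x) d) (M.incl z)))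
    (ψn : Matrix (Fin n) (Fin n) D → Matrix (Fin n) (Fin n) B)
    (hψn : ∀ (dM : Matrix (Fin n) (Fin n) D)
        (xM zM : Matrix (Fin n) (Fin n) X) (i j : Fin n),
      ∑ k, M.innA (∑ l, M.rB (xM i l) (ψn dM l k)) (zM j k)
        = ∑ k, φ (M.innC (∑ l, M.rD (M.incl (xM i l)) (dM l k)) (M.incl (zM j k)))) :
    ∀ (dM : Matrix (Fin n) (Fin n) D) (i j : Fin n), ψn dM i j = ψ (dM i j) :=
  stmt12_general M n φ ψ hψ ψn hψn
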